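/- Let p ∈ Q_α be a projection and p' = (pₖ) ∈ B a lift of p with each pₖ a projection in M_{n_k}. Then the rank of pₖ is eventually constant, i.e., there exist r and K such that rank(pₖ) = r for all k ≥ K. -/

import Mathlib

/-!
Two idempotent matrices `e, f` with `‖f - e‖ < 1` have the same rank: `f` is injective on the
range of `e`, since `x = e x` and `f x = 0` give `‖x‖ = ‖(f - e) x‖ ≤ ‖f - e‖ ‖x‖`. The corner
embedding `a ↦ a ⊕ 0` is `a ↦ E a Eᵀ` with `Eᵀ E = 1`, so it preserves idempotents and rank.
Once `‖p_{k+1} - p_k ⊕ 0‖ < 1`, the rank of `p_{k+1}` is therefore that of `p_k`.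
-/

open scoped Matrix.Norms.L2Operator
open Filter

/-- The standard upper-left corner embedding `M_{n k} → M_{n (k+1)}`, `a ↦ a ⊕ 0`. -/
def cornerEmb (n : ℕ → ℕ) (k : ℕ) (a : Matrix (Fin (n k)) (Fin (n k)) ℂ) :
    Matrix (Fin (n (k + 1))) (Fin (n (k + 1))) ℂ :=
  fun i j =>
    if hi : (i : ℕ) < n k then
      if hj : (j : ℕ) < n k then a ⟨i, hi⟩ ⟨j, hj⟩ else 0
    else 0

open Matrix Module

theorem LinearMap.finrank_le_finrank_range_of_disjoint_ker {K V W : Type*} [DivisionRing K]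
    [AddCommGroup V] [Module K V] [AddCommGroup W] [Module K W] [FiniteDimensional K W]
    {S : Submodule K V} {f : V →ₗ[K] W} (h : Disjoint S (ker f)) :
    finrank K S ≤ finrank K (range f) := by
  have hinj : Function.Injective (f.domRestrict S) := by
    rwa [← ker_eq_bot, ker_domRestrict, ← Submodule.disjoint_iff_comap_eq_bot]
  calc finrank K S = finrank K (range (f.domRestrict S)) := (finrank_range_of_inj hinj).symm
    _ ≤ finrank K (range f) := Submodule.finrank_mono (range_domRestrict_le_range f S)

namespace Matrix

section NormClose

variable {m 𝕜 : Type*} [Fintype m] [DecidableEq m] [RCLike 𝕜]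

theorem disjoint_range_ker_of_norm_sub_lt_one {p q : Matrix m m 𝕜} (hp : IsIdempotentElem p)
    (h : ‖q - p‖ < 1) : Disjoint (LinearMap.range p.mulVecLin) (LinearMap.ker q.mulVecLin) := by
  rw [LinearMap.disjoint_ker]
  rintro _ ⟨y, rfl⟩ hq
  set x := p *ᵥ y
  have hpx : p *ᵥ x = x := by simp only [x, mulVec_mulVec, hp.eq]
  have hx : (q - p) *ᵥ x = -x := by
    rw [sub_mulVec, show q *ᵥ x = 0 from hq, hpx, zero_sub]
  have hle := l2_opNorm_mulVec (q - p) (WithLp.toLp 2 x)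
  rw [hx, show (EuclideanSpace.equiv m 𝕜).symm (-x) = -WithLp.toLp 2 x from rfl, norm_neg] at hle
  have : ‖WithLp.toLp 2 x‖ = 0 := by
    nlinarith [norm_nonneg (WithLp.toLp 2 x), norm_nonneg (q - p)]
  simpa using this

theorem rank_le_rank_of_norm_sub_lt_one {p q : Matrix m m 𝕜} (hp : IsIdempotentElem p)
    (h : ‖q - p‖ < 1) : p.rank ≤ q.rank :=
  LinearMap.finrank_le_finrank_range_of_disjoint_ker (disjoint_range_ker_of_norm_sub_lt_one hp h)

theorem rank_eq_rank_of_norm_sub_lt_one {p q : Matrix m m 𝕜} (hp : IsIdempotentElem p)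
    (hq : IsIdempotentElem q) (h : ‖q - p‖ < 1) : p.rank = q.rank :=
  le_antisymm (rank_le_rank_of_norm_sub_lt_one hp h)
    (rank_le_rank_of_norm_sub_lt_one hq (by rwa [norm_sub_rev]))

end NormClose

section Conjugation

variable {m n R : Type*} [Fintype m] [Fintype n] [DecidableEq m]

theorem isIdempotentElem_mul_mul_of_mul_eq_one [Semiring R] {E : Matrix n m R}
    {F : Matrix m n R} (hFE : F * E = 1) {a : Matrix m m R} (ha : IsIdempotentElem a) :
    IsIdempotentElem (E * a * F) :=
  calc E * a * F * (E * a * F) = E * (a * (F * E) * a) * F := by simp only [Matrix.mul_assoc]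
    _ = E * a * F := by rw [hFE, Matrix.mul_one, ha.eq, Matrix.mul_assoc]

theorem rank_mul_mul_of_mul_eq_one [CommRing R] [StrongRankCondition R] {E : Matrix n m R}
    {F : Matrix m n R} (hFE : F * E = 1) (a : Matrix m m R) : (E * a * F).rank = a.rank := by
  refine le_antisymm ((rank_mul_le_left _ _).trans (rank_mul_le_right _ _)) ?_
  calc a.rank = (F * (E * a * F) * E).rank := by
        simp only [← Matrix.mul_assoc, hFE, Matrix.one_mul]
        simp only [Matrix.mul_assoc, hFE, Matrix.mul_one]
    _ ≤ (E * a * F).rank := (rank_mul_le_left _ _).trans (rank_mul_le_right _ _)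

end Conjugation

section CastLE

variable {R : Type*} [Semiring R] {k N : ℕ}

theorem transpose_one_submatrix_castLE_mul (h : k ≤ N) :
    ((1 : Matrix (Fin N) (Fin N) R).submatrix id (Fin.castLE h))ᵀ *
      (1 : Matrix (Fin N) (Fin N) R).submatrix id (Fin.castLE h) = 1 := by
  ext i j
  simp [mul_apply, one_apply]

theorem one_submatrix_castLE_mul_apply {o : Type*} (h : k ≤ N) (B : Matrix (Fin k) o R)
    (i : Fin N) (j : o) :
    ((1 : Matrix (Fin N) (Fin N) R).submatrix id (Fin.castLE h) * B) i j =
      if hi : (i : ℕ) < k then B ⟨i, hi⟩ j else 0 := by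
  split_ifs with hi
  · obtain ⟨i, rfl⟩ : ∃ i' : Fin k, Fin.castLE h i' = i := ⟨⟨i, hi⟩, rfl⟩
    simp [mul_apply, one_apply]
  · rw [mul_apply]
    refine Finset.sum_eq_zero fun l _ => ?_
    have : i ≠ Fin.castLE h l := fun hil => hi (hil ▸ l.isLt)
    simp [this]

end CastLE

end Matrix

section CornerEmb

variable {n : ℕ → ℕ} {k : ℕ}

theorem cornerEmb_eq_mul_mul (h : n k ≤ n (k + 1)) (a : Matrix (Fin (n k)) (Fin (n k)) ℂ) :
    cornerEmb n k a = (1 : Matrix _ _ ℂ).submatrix id (Fin.castLE h) * a *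
      ((1 : Matrix _ _ ℂ).submatrix id (Fin.castLE h))ᵀ := by
  set E := (1 : Matrix (Fin (n (k + 1))) (Fin (n (k + 1))) ℂ).submatrix id (Fin.castLE h)
  rw [show E * a * Eᵀ = (E * (E * a)ᵀ)ᵀ by simp only [transpose_mul, transpose_transpose,
    Matrix.mul_assoc]]
  ext i j
  simp only [transpose_apply, E, one_submatrix_castLE_mul_apply, cornerEmb]
  split_ifs <;> rfl

theorem rank_cornerEmb (h : n k ≤ n (k + 1)) (a : Matrix (Fin (n k)) (Fin (n k)) ℂ) :
    (cornerEmb n k a).rank = a.rank := by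
  rw [cornerEmb_eq_mul_mul h, rank_mul_mul_of_mul_eq_one (transpose_one_submatrix_castLE_mul h)]

theorem isIdempotentElem_cornerEmb (h : n k ≤ n (k + 1)) {a : Matrix (Fin (n k)) (Fin (n k)) ℂ}
    (ha : IsIdempotentElem a) : IsIdempotentElem (cornerEmb n k a) := by
  rw [cornerEmb_eq_mul_mul h]
  exact isIdempotentElem_mul_mul_of_mul_eq_one (transpose_one_submatrix_castLE_mul h) ha

end CornerEmb

theorem stmt_5_general (n : ℕ → ℕ) (hn : StrictMono n)
    (p : ∀ k, Matrix (Fin (n k)) (Fin (n k)) ℂ)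
    (hidem : ∀ k, p k * p k = p k)
    (hα : Tendsto (fun k => ‖p (k + 1) - cornerEmb n k (p k)‖) atTop (nhds 0)) :
    ∃ r K : ℕ, ∀ k ≥ K, (p k).rank = r := by
  obtain ⟨K, hK⟩ := eventually_atTop.mp (hα.eventually (gt_mem_nhds one_pos))
  refine ⟨(p K).rank, K, Nat.le_induction rfl fun k hk ih => ?_⟩
  have hle : n k ≤ n (k + 1) := hn.monotone k.le_succ
  rw [← ih, ← rank_cornerEmb hle,
    rank_eq_rank_of_norm_sub_lt_one (isIdempotentElem_cornerEmb hle (hidem k)) (hidem (k + 1))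
      (hK k hk)]

/-- Let `p ∈ Q_α` be a projection and `p' = (pₖ)` a lift of `p` with each `pₖ` a
projection in `M_{n_k}`.  (α-invariance of `p` means precisely that
`‖p_{k+1} - pₖ ⊕ 0‖ → 0`.)  Then the rank of `pₖ` is eventually constant: there
exist `r` and `K` with `rank pₖ = r` for all `k ≥ K`. -/
theorem stmt_5 (n : ℕ → ℕ) (hn : StrictMono n)
    (p : ∀ k, Matrix (Fin (n k)) (Fin (n k)) ℂ)
    (hherm : ∀ k, (p k).IsHermitian) (hidem : ∀ k, p k * p k = p k)
    (hα : Tendsto (fun k => ‖p (k + 1) - cornerEmb n k (p k)‖) atTop (nhds 0)) :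
    ∃ r K : ℕ, ∀ k ≥ K, (p k).rank = r :=
  stmt_5_general n hn p hidem hα
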